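/- Let K be a nonempty closed convex subset of Euclidean space ℝ^d. Then the function x ↦ dist(x, K)² is continuously differentiable (of class C¹) on all of ℝ^d. -/

import Mathlib

/-!
Let `p` be the nearest-point projection onto `K`, characterised by `p x ∈ K` and the variational
inequality `⟪x - p x, w - p x⟫ ≤ 0` for `w ∈ K`. Adding the inequalities at `x` and `y` shows that
`p` is firmly nonexpansive, in particular `1`-Lipschitz. Comparing `dist(y, K)²` with `‖y - p x‖²`
and `dist(x, K)²` with `‖x - p y‖²` squeezes `dist(·, K)²` between two quadratics with common
linear part `h ↦ 2 ⟪x - p x, h⟫` at `x`, so its derivative is `2 ⟪x - p x, ·⟫`, continuous in `x`.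
-/

open Metric Topology Asymptotics RealInnerProductSpace

theorem hasFDerivAt_of_norm_sub_le_mul_sq {𝕜 E F : Type*} [NontriviallyNormedField 𝕜]
    [NormedAddCommGroup E] [NormedSpace 𝕜 E] [NormedAddCommGroup F] [NormedSpace 𝕜 F]
    {f : E → F} {f' : E →L[𝕜] F} {x : E} (C : ℝ)
    (h : ∀ y, ‖f y - f x - f' (y - x)‖ ≤ C * ‖y - x‖ ^ 2) : HasFDerivAt f f' x := by
  have hO : (fun y => f y - f x - f' (y - x)) =O[𝓝 x] fun y => ‖y - x‖ ^ 2 :=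
    .of_bound C (.of_forall fun y => by simpa only [norm_pow, norm_norm] using h y)
  exact .of_isLittleO (hO.trans_isLittleO (isLittleO_pow_sub_sub x one_lt_two))

variable {F : Type*} [NormedAddCommGroup F] [InnerProductSpace ℝ F]

/-- The variational characterisation of the nearest-point projection onto a convex set. -/
def IsConvexProjection (K : Set F) (p : F → F) : Prop :=
  ∀ x, p x ∈ K ∧ ∀ w ∈ K, ⟪x - p x, w - p x⟫ ≤ 0

theorem IsConvexProjection.exists {K : Set F} (hne : K.Nonempty) (hc : IsComplete K)
    (hconv : Convex ℝ K) : ∃ p, IsConvexProjection K p := by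
  choose p hpK hpmin using exists_norm_eq_iInf_of_complete_convex hne hc hconv
  exact ⟨p, fun x => ⟨hpK x, (norm_eq_iInf_iff_real_inner_le_zero hconv (hpK x)).1 (hpmin x)⟩⟩

namespace IsConvexProjection

variable {K : Set F} {p : F → F}

theorem norm_sub_le (hp : IsConvexProjection K p) (x : F) {w : F} (hw : w ∈ K) :
    ‖x - p x‖ ≤ ‖x - w‖ := by
  have hsplit : x - w = (x - p x) - (w - p x) := by abel
  have hsq : ‖x - p x‖ ^ 2 ≤ ‖x - w‖ ^ 2 := by
    rw [hsplit, norm_sub_sq_real (x - p x)]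
    nlinarith [(hp x).2 w hw, sq_nonneg ‖w - p x‖]
  exact (pow_le_pow_iff_left₀ (norm_nonneg _) (norm_nonneg _) two_ne_zero).1 hsq

theorem infDist_eq (hp : IsConvexProjection K p) (x : F) : infDist x K = ‖x - p x‖ := by
  refine le_antisymm ?_ ((le_infDist ⟨_, (hp x).1⟩).2 fun w hw => ?_)
  · rw [← dist_eq_norm]
    exact infDist_le_dist_of_mem (hp x).1
  · rw [dist_eq_norm]
    exact hp.norm_sub_le x hw

theorem norm_sub_sq_le_inner (hp : IsConvexProjection K p) (x y : F) :
    ‖p x - p y‖ ^ 2 ≤ ⟪x - y, p x - p y⟫ := by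
  have hsum : ⟪x - p x, p y - p x⟫ + ⟪y - p y, p x - p y⟫
      = ‖p x - p y‖ ^ 2 - ⟪x - y, p x - p y⟫ := by
    rw [← real_inner_self_eq_norm_sq]
    simp only [inner_sub_left, inner_sub_right, real_inner_comm]
    ring
  linarith [(hp x).2 _ (hp y).1, (hp y).2 _ (hp x).1]

theorem lipschitzWith_one (hp : IsConvexProjection K p) : LipschitzWith 1 p :=
  LipschitzWith.mk_one fun x y => by
    rw [dist_eq_norm, dist_eq_norm]
    have h := (hp.norm_sub_sq_le_inner x y).trans (real_inner_le_norm _ _)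
    nlinarith [norm_nonneg (p x - p y), norm_nonneg (x - y)]

theorem inner_le_norm_sq (hp : IsConvexProjection K p) (x y : F) :
    ⟪p y - p x, y - x⟫ ≤ ‖y - x‖ ^ 2 := by
  have hlip : ‖p y - p x‖ ≤ ‖y - x‖ := by
    simpa only [dist_eq_norm, NNReal.coe_one, one_mul] using
      hp.lipschitzWith_one.dist_le_mul y x
  calc ⟪p y - p x, y - x⟫ ≤ ‖p y - p x‖ * ‖y - x‖ := real_inner_le_norm _ _
    _ ≤ ‖y - x‖ * ‖y - x‖ := by gcongr
    _ = ‖y - x‖ ^ 2 := (sq _).symm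

theorem hasFDerivAt_norm_sub_sq (hp : IsConvexProjection K p) (x : F) :
    HasFDerivAt (fun y => ‖y - p y‖ ^ 2) ((2 : ℝ) • innerSL ℝ (x - p x)) x := by
  refine hasFDerivAt_of_norm_sub_le_mul_sq 1 fun y => ?_
  have hupper : ‖y - p y‖ ^ 2 ≤ ‖x - p x‖ ^ 2 + 2 * ⟪x - p x, y - x⟫ + ‖y - x‖ ^ 2 := by
    rw [← norm_add_sq_real, show x - p x + (y - x) = y - p x by abel]
    gcongr
    exact hp.norm_sub_le y (hp x).1
  have hlower : ‖x - p x‖ ^ 2 ≤ ‖y - p y‖ ^ 2 - 2 * ⟪y - p y, y - x⟫ + ‖y - x‖ ^ 2 := by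
    rw [← norm_sub_sq_real, show y - p y - (y - x) = x - p y by abel]
    gcongr
    exact hp.norm_sub_le x (hp y).1
  have hmono : ⟪x - p x, y - x⟫ ≤ ⟪y - p y, y - x⟫ := by
    have hexp : ⟪y - p y, y - x⟫ - ⟪x - p x, y - x⟫ = ‖y - x‖ ^ 2 - ⟪p y - p x, y - x⟫ := by
      rw [← real_inner_self_eq_norm_sq]
      simp only [inner_sub_left]
      ring
    linarith [hp.inner_le_norm_sq x y]
  simp only [FunLike.coe_smul, Pi.smul_apply, innerSL_apply_apply, smul_eq_mul,
    Real.norm_eq_abs, one_mul]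
  rw [abs_le]
  constructor <;> nlinarith [sq_nonneg ‖y - x‖]

theorem contDiff_norm_sub_sq (hp : IsConvexProjection K p) :
    ContDiff ℝ 1 fun x => ‖x - p x‖ ^ 2 := by
  have hcont : Continuous fun x => (2 : ℝ) • innerSL ℝ (x - p x) := by
    have := hp.lipschitzWith_one.continuous
    fun_prop
  exact contDiff_one_iff_hasFDerivAt.2 ⟨_, hcont, hp.hasFDerivAt_norm_sub_sq⟩

end IsConvexProjection

theorem Convex.contDiff_infDist_sq {K : Set F} (hconv : Convex ℝ K) (hne : K.Nonempty)
    (hc : IsComplete K) : ContDiff ℝ 1 fun x => infDist x K ^ 2 := by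
  obtain ⟨p, hp⟩ := IsConvexProjection.exists hne hc hconv
  simpa only [hp.infDist_eq] using hp.contDiff_norm_sub_sq

/-- The squared distance to a nonempty closed convex set `K ⊆ ℝ^d` is
continuously differentiable (of class `C¹`) on all of `ℝ^d`. -/
theorem contDiff_sq_infDist (d : ℕ)
    (K : Set (EuclideanSpace ℝ (Fin d)))
    (hKne : K.Nonempty) (hKcl : IsClosed K) (hKconv : Convex ℝ K) :
    ContDiff ℝ 1
      (fun x : EuclideanSpace ℝ (Fin d) => (Metric.infDist x K) ^ 2) :=
  hKconv.contDiff_infDist_sq hKne hKcl.isComplete
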